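/- Strong regularity lemma (Lemma 5.2 of the paper, after Tao): Let H be a real or complex Hilbert space and S a set of vectors of H each of norm at most 1. For every ε > 0 and every function 𝓕 : ℕ_{>0} → ℝ_{>0} there exists a constant M₀ = M₀(𝓕, ε) such that every f ∈ H with ‖f‖_H ≤ 1 admits a decomposition f = f_str + f_psd + f_sml, for some positive integer M ≤ M₀, where f_str is (M, M)-structured with respect to S, ‖f_sml‖_H ≤ ε, f_psd is 1/𝓕(M)-pseudorandom with respect to S, and ‖f_psd‖_H ≤ ‖f‖_H. -/

import Mathlib

open scoped BigOperators
open Submodule Set Finset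

/-- A vector `f` in a Hilbert space is `(M, K)`-structured with respect to a set `S`
of structured vectors if it is a linear combination of at most `M` vectors of `S`
with scalar coefficients of norm at most `K`. -/
def IsStructured {𝕜 H : Type*} [RCLike 𝕜] [NormedAddCommGroup H] [InnerProductSpace 𝕜 H]
    (S : Set H) (M : ℕ) (K : ℝ) (f : H) : Prop :=
  ∃ (M' : ℕ) (c : Fin M' → 𝕜) (v : Fin M' → H),
    M' ≤ M ∧ (∀ i, v i ∈ S) ∧ (∀ i, ‖c i‖ ≤ K) ∧ f = ∑ i, c i • v i

/-- A vector `f` is `ε`-pseudorandom with respect to `S` if `|⟨f, v⟩| ≤ ε` for all `v ∈ S`. -/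
def IsPseudorandom {𝕜 H : Type*} [RCLike 𝕜] [NormedAddCommGroup H] [InnerProductSpace 𝕜 H]
    (S : Set H) (ε : ℝ) (f : H) : Prop :=
  ∀ v ∈ S, ‖(inner 𝕜 f v : 𝕜)‖ ≤ ε

/-!
The decomposition is found by greedy pursuit run in phases. In phase `i`, with threshold
`δ = 1 / 𝓕 (M i)`, one repeatedly subtracts `⟪v, r⟫ • v` from the residual `r` while some
`v ∈ S` has `‖⟪r, v⟫‖ > δ`; each step lowers `‖r‖²` by at least `‖⟪r, v⟫‖² > δ²`, so the
phase ends after at most `δ⁻²` steps with coefficients of norm at most `1`, leaving a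
`δ`-pseudorandom residual `r'`. Writing `d = r - r'`, every coefficient of `d` exceeds `δ`
while `r'` correlates with each of its vectors by at most `δ`, so `|⟪r', d⟫|` is bounded by
the energy drop `‖r‖² - ‖r'‖²` and hence `‖d‖² ≤ 3 (‖r‖² - ‖r'‖²)`. The energy can drop by
more than `ε² / 3` in at most `3 / ε²` consecutive phases since `‖f‖ ≤ 1`, so some early
phase has `‖d‖ ≤ ε`, and `f = (f - r) + r' + d` is the required decomposition.
-/

open Finset

section Structured

variable {𝕜 H : Type*} [RCLike 𝕜] [NormedAddCommGroup H] [InnerProductSpace 𝕜 H]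
  {S : Set H} {M N : ℕ} {K : ℝ} {f g : H}

theorem IsStructured.zero (S : Set H) (M : ℕ) (K : ℝ) : IsStructured (𝕜 := 𝕜) S M K (0 : H) :=
  ⟨0, Fin.elim0, Fin.elim0, Nat.zero_le M, nofun, nofun, by simp⟩

theorem IsStructured.add (hf : IsStructured (𝕜 := 𝕜) S M K f)
    (hg : IsStructured (𝕜 := 𝕜) S N K g) : IsStructured (𝕜 := 𝕜) S (M + N) K (f + g) := by
  obtain ⟨m, c, v, hm, hv, hc, rfl⟩ := hf
  obtain ⟨n, c', v', hn, hv', hc', rfl⟩ := hg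
  refine ⟨m + n, Fin.append c c', Fin.append v v', by omega, Fin.addCases ?_ ?_,
    Fin.addCases ?_ ?_, by simp [Fin.sum_univ_add]⟩ <;> simp [*]

theorem IsStructured.mono {M' : ℕ} {K' : ℝ} (hf : IsStructured (𝕜 := 𝕜) S M K f)
    (hM : M ≤ M') (hK : K ≤ K') : IsStructured (𝕜 := 𝕜) S M' K' f := by
  obtain ⟨m, c, v, hm, hv, hc, rfl⟩ := hf
  exact ⟨m, c, v, hm.trans hM, hv, fun i => (hc i).trans hK, rfl⟩

end Structured

section Pursuit

variable {𝕜 H : Type*} [RCLike 𝕜] [NormedAddCommGroup H] [InnerProductSpace 𝕜 H]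

local notation "⟪" x ", " y "⟫" => @inner 𝕜 _ _ x y

theorem norm_sub_inner_smul_sq_add_le (r : H) {v : H} (hv : ‖v‖ ≤ 1) :
    ‖r - ⟪v, r⟫ • v‖ ^ 2 + ‖⟪r, v⟫‖ ^ 2 ≤ ‖r‖ ^ 2 := by
  have hre : RCLike.re ⟪r, ⟪v, r⟫ • v⟫ = ‖⟪r, v⟫‖ ^ 2 := by
    rw [inner_smul_right, ← inner_conj_symm, RCLike.conj_mul, ← RCLike.ofReal_pow,
      RCLike.ofReal_re]
  have hv2 : ‖v‖ ^ 2 ≤ 1 := by nlinarith [norm_nonneg v]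
  rw [@norm_sub_sq 𝕜, hre, norm_smul, norm_inner_symm, mul_pow]
  nlinarith [sq_nonneg ‖⟪r, v⟫‖]

theorem exists_greedy_pursuit {S : Set H} (hS : ∀ v ∈ S, ‖v‖ ≤ 1) {δ : ℝ} (hδ : 0 < δ)
    (r : H) :
    ∃ (n : ℕ) (c : Fin n → 𝕜) (v : Fin n → H), (∀ i, v i ∈ S) ∧ (∀ i, δ < ‖c i‖) ∧
      IsPseudorandom (𝕜 := 𝕜) S δ (r - ∑ i, c i • v i) ∧
      ‖r - ∑ i, c i • v i‖ ^ 2 + ∑ i, ‖c i‖ ^ 2 ≤ ‖r‖ ^ 2 := by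
  obtain ⟨k, hk⟩ := exists_nat_gt (‖r‖ ^ 2 / δ ^ 2)
  replace hk : ‖r‖ ^ 2 < k * δ ^ 2 := (div_lt_iff₀ (by positivity)).1 hk
  induction k generalizing r with
  | zero => exact absurd hk (by simp only [Nat.cast_zero, zero_mul, not_lt]; positivity)
  | succ k ih =>
    by_cases hr : IsPseudorandom (𝕜 := 𝕜) S δ r
    · exact ⟨0, Fin.elim0, Fin.elim0, nofun, nofun, by simpa using hr, by simp⟩
    obtain ⟨u, huS, hu⟩ : ∃ u ∈ S, δ < ‖⟪r, u⟫‖ := by simpa [IsPseudorandom] using hr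
    have hstep := norm_sub_inner_smul_sq_add_le (𝕜 := 𝕜) r (hS u huS)
    obtain ⟨n, c, v, hvS, hc, hpsd, hE⟩ :=
      ih (r - ⟪u, r⟫ • u) (by push_cast at hk; nlinarith)
    refine ⟨n + 1, Fin.cons ⟪u, r⟫ c, Fin.cons u v, Fin.cases huS hvS,
      Fin.cases (by rwa [Fin.cons_zero, norm_inner_symm]) hc, ?_, ?_⟩
    · simpa [Fin.sum_univ_succ, sub_sub] using hpsd
    · simp only [Fin.sum_univ_succ, Fin.cons_zero, Fin.cons_succ, ← sub_sub, norm_inner_symm]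
      linarith

theorem exists_structured_add_isPseudorandom {S : Set H} (hS : ∀ v ∈ S, ‖v‖ ≤ 1) {δ : ℝ}
    (hδ : 0 < δ) {r : H} (hr : ‖r‖ ≤ 1) :
    ∃ d r' : H, r = d + r' ∧ IsStructured (𝕜 := 𝕜) S ⌊δ⁻¹ ^ 2⌋₊ 1 d ∧
      IsPseudorandom (𝕜 := 𝕜) S δ r' ∧ ‖d‖ ^ 2 ≤ 3 * (‖r‖ ^ 2 - ‖r'‖ ^ 2) := by
  obtain ⟨n, c, v, hvS, hc, hpsd, hE⟩ := exists_greedy_pursuit (𝕜 := 𝕜) hS hδ r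
  set d := ∑ i, c i • v i
  set Q := ∑ i, ‖c i‖ ^ 2
  have hQ : Q ≤ 1 := by nlinarith [sq_nonneg ‖r - d‖, norm_nonneg r]
  have hcount : (n : ℝ) * δ ^ 2 ≤ Q :=
    calc (n : ℝ) * δ ^ 2 = ∑ _i : Fin n, δ ^ 2 := by simp
      _ ≤ Q := sum_le_sum fun i _ => pow_le_pow_left₀ hδ.le (hc i).le 2
  -- each coefficient exceeds the threshold that bounds the correlations of the residual
  have hcross : ‖⟪r - d, d⟫‖ ≤ Q :=
    calc ‖⟪r - d, d⟫‖ = ‖∑ i, c i * ⟪r - d, v i⟫‖ := by simp only [d, inner_sum, inner_smul_right]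
      _ ≤ ∑ i, ‖c i‖ * ‖⟪r - d, v i⟫‖ := (norm_sum_le _ _).trans_eq (by simp only [norm_mul])
      _ ≤ Q := sum_le_sum fun i _ =>
        mul_le_mul_of_nonneg_left ((hpsd _ (hvS i)).trans (hc i).le) (norm_nonneg _) |>.trans_eq
          (sq _).symm
  refine ⟨d, r - d, by abel, ⟨n, c, v, ?_, hvS, fun i => ?_, rfl⟩, hpsd, ?_⟩
  · refine Nat.le_floor ?_
    rw [inv_pow, ← one_div, le_div_iff₀ (by positivity)]
    linarith
  · have : ‖c i‖ ^ 2 ≤ Q := single_le_sum (fun j _ => sq_nonneg ‖c j‖) (mem_univ i)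
    nlinarith [norm_nonneg (c i)]
  · have hsplit := @norm_add_sq 𝕜 _ _ _ _ (r - d) d
    rw [sub_add_cancel] at hsplit
    have hre := neg_le_of_abs_le (RCLike.abs_re_le_norm ⟪r - d, d⟫)
    linarith

end Pursuit

-- `regularityScale 𝓕 i` bounds the number of vectors found before phase `i`; that phase, run at
-- threshold `1 / 𝓕 (regularityScale 𝓕 i)`, adds at most `𝓕 (regularityScale 𝓕 i) ^ 2` more.
noncomputable def regularityScale (𝓕 : ℕ → ℝ) : ℕ → ℕ
  | 0 => 1
  | i + 1 => regularityScale 𝓕 i + ⌊𝓕 (regularityScale 𝓕 i) ^ 2⌋₊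

theorem one_le_regularityScale (𝓕 : ℕ → ℝ) : ∀ i, 1 ≤ regularityScale 𝓕 i
  | 0 => le_rfl
  | i + 1 => (one_le_regularityScale 𝓕 i).trans (Nat.le_add_right _ _)

theorem regularityScale_mono (𝓕 : ℕ → ℝ) : Monotone (regularityScale 𝓕) :=
  monotone_nat_of_le_succ fun _ => Nat.le_add_right _ _

def IsRegularDecomposition (𝕜 : Type*) {H : Type*} [RCLike 𝕜] [NormedAddCommGroup H]
    [InnerProductSpace 𝕜 H] (S : Set H) (ε : ℝ) (𝓕 : ℕ → ℝ) (M : ℕ) (f : H) : Prop :=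
  ∃ fstr fpsd fsml : H, f = fstr + fpsd + fsml ∧ IsStructured (𝕜 := 𝕜) S M M fstr ∧
    ‖fsml‖ ≤ ε ∧ IsPseudorandom (𝕜 := 𝕜) S (1 / 𝓕 M) fpsd ∧ ‖fpsd‖ ≤ ‖f‖

theorem exists_isRegularDecomposition_or_energy_le {𝕜 H : Type*} [RCLike 𝕜]
    [NormedAddCommGroup H] [InnerProductSpace 𝕜 H] {S : Set H} (hS : ∀ v ∈ S, ‖v‖ ≤ 1)
    {𝓕 : ℕ → ℝ} (h𝓕 : ∀ n, 0 < n → 0 < 𝓕 n) {ε : ℝ} (hε : 0 ≤ ε) {f : H} (hf : ‖f‖ ≤ 1) :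
    ∀ i : ℕ, (∃ j < i, IsRegularDecomposition 𝕜 S ε 𝓕 (regularityScale 𝓕 j) f) ∨
      ∃ r : H, IsStructured (𝕜 := 𝕜) S (regularityScale 𝓕 i) 1 (f - r) ∧
        i * ε ^ 2 ≤ 3 * (‖f‖ ^ 2 - ‖r‖ ^ 2)
  | 0 => Or.inr ⟨f, by simpa using IsStructured.zero S _ 1, by simp⟩
  | i + 1 => by
    obtain ⟨j, hj, hdec⟩ | ⟨r, hstr, hE⟩ :=
      exists_isRegularDecomposition_or_energy_le (𝕜 := 𝕜) hS h𝓕 hε hf i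
    · exact Or.inl ⟨j, hj.trans i.lt_succ_self, hdec⟩
    set M := regularityScale 𝓕 i
    have hM : 1 ≤ M := one_le_regularityScale 𝓕 i
    have hrf : ‖r‖ ≤ ‖f‖ :=
      (pow_le_pow_iff_left₀ (norm_nonneg r) (norm_nonneg f) two_ne_zero).1 (by nlinarith)
    obtain ⟨d, r', rfl, hd, hr', hdE⟩ := exists_structured_add_isPseudorandom (𝕜 := 𝕜) hS
      (one_div_pos.2 (h𝓕 M hM)) (hrf.trans hf)
    have hr'f : ‖r'‖ ≤ ‖f‖ := hrf.trans' <|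
      (pow_le_pow_iff_left₀ (norm_nonneg _) (norm_nonneg _) two_ne_zero).1 (by nlinarith)
    by_cases hsmall : ‖d‖ ≤ ε
    · exact Or.inl ⟨i, i.lt_succ_self, f - (d + r'), r', d, by abel,
        hstr.mono le_rfl (by exact_mod_cast hM), hsmall, hr', hr'f⟩
    · refine Or.inr ⟨r', ?_, ?_⟩
      · have := hstr.add hd
        rwa [one_div, inv_inv, show f - (d + r') + d = f - r' by abel] at this
      · push_cast
        nlinarith [not_le.1 hsmall]

/-- Strong regularity lemma (Tao): for every `ε > 0` and growth function `𝓕` there is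
`M₀ = M₀(𝓕, ε)` such that every vector of norm at most `1` decomposes as an
`(M, M)`-structured part (for some positive `M ≤ M₀`), a part of norm at most `ε`,
and a `1/𝓕(M)`-pseudorandom part of no larger norm. -/
theorem strong_regularity_lemma {𝕜 H : Type*} [RCLike 𝕜] [NormedAddCommGroup H]
    [InnerProductSpace 𝕜 H] (S : Set H) (hS : ∀ v ∈ S, ‖v‖ ≤ 1)
    (ε : ℝ) (hε : 0 < ε) (𝓕 : ℕ → ℝ) (h𝓕 : ∀ n, 0 < n → 0 < 𝓕 n) :
    ∃ M₀ : ℕ, ∀ f : H, ‖f‖ ≤ 1 →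
      ∃ (M : ℕ) (fstr fpsd fsml : H),
        0 < M ∧ M ≤ M₀ ∧ f = fstr + fpsd + fsml ∧
        IsStructured (𝕜 := 𝕜) S M (M : ℝ) fstr ∧
        ‖fsml‖ ≤ ε ∧
        IsPseudorandom (𝕜 := 𝕜) S (1 / 𝓕 M) fpsd ∧
        ‖fpsd‖ ≤ ‖f‖ := by
  obtain ⟨T, hT⟩ := exists_nat_gt (3 / ε ^ 2)
  rw [div_lt_iff₀ (by positivity)] at hT
  refine ⟨regularityScale 𝓕 T, fun f hf => ?_⟩
  obtain ⟨j, hj, fstr, fpsd, fsml, hdec⟩ | ⟨r, -, hE⟩ :=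
    exists_isRegularDecomposition_or_energy_le (𝕜 := 𝕜) hS h𝓕 hε.le hf T
  · exact ⟨_, fstr, fpsd, fsml, one_le_regularityScale 𝓕 j,
      regularityScale_mono 𝓕 hj.le, hdec⟩
  · nlinarith [norm_nonneg f, sq_nonneg ‖r‖]
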